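/- arXiv:math/0302201 — 3 statements merged into one kernel-verified Lean document; each statement's English description precedes it below -/
import Mathlib

section
/- Let W be a compact open subgroup of G which is tidy for the automorphism α, and let w ∈ W be such that the set {αⁿ(w) : n ≥ 0} is bounded. Then w belongs to W_{α−}, i.e. αⁿ(w) ∈ W for every n ≥ 0. -/
open scoped Pointwise

universe u

variable {G : Type u} [Group G] [TopologicalSpace G] [IsTopologicalGroup G]

/-- `V_{α+} = ⋂_{n ≥ 0} αⁿ(V)`. -/
def plusSet (α : MulAut G) (V : Set G) : Set G := ⋂ n : ℕ, ⇑(α ^ n) '' V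

/-- `V_{α−} = ⋂_{n ≥ 0} α⁻ⁿ(V)`. -/
def minusSet (α : MulAut G) (V : Set G) : Set G := ⋂ n : ℕ, ⇑(α⁻¹ ^ n) '' V

/-- `V_{α++} = ⋃_{n ≥ 0} αⁿ(V_{α+})`. -/
def plusplusSet (α : MulAut G) (V : Set G) : Set G := ⋃ n : ℕ, ⇑(α ^ n) '' plusSet α V

/-- `V` is tidy for `α`: condition T1(α), `V = V_{α+}·V_{α−}`, together with
condition T2(α), `V_{α++}` is closed. -/
def IsTidy (α : MulAut G) (V : Set G) : Prop :=
  V = plusSet α V * minusSet α V ∧ IsClosed (plusplusSet α V)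

/-- `U` is invariably tidy for `𝔞`: for every `γ` in the group generated by `𝔞`,
`γ(U)` is tidy for every `a ∈ 𝔞`. -/
def InvariablyTidy (𝔞 : Set (MulAut G)) (U : Set G) : Prop :=
  ∀ γ ∈ Subgroup.closure 𝔞, ∀ a ∈ 𝔞, IsTidy a (⇑γ '' U)

/-- `U_𝔞 = ⋂_{a ∈ 𝔞} U_{a+}` (set version). -/
def interSet (𝔞 : Set (MulAut G)) (U : Set G) : Set G := ⋂ a ∈ 𝔞, plusSet a U

/-- `H_{α+}` as a subgroup. -/
def plusSub (α : MulAut G) (H : Subgroup G) : Subgroup G :=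
  ⨅ n : ℕ, H.map (MulEquiv.toMonoidHom (α ^ n))

/-- `H_𝔞 = ⋂_{a ∈ 𝔞} H_{a+}` as a subgroup. -/
def interSub (𝔞 : Set (MulAut G)) (H : Subgroup G) : Subgroup G := ⨅ a ∈ 𝔞, plusSub a H

/-- The scale of `α` : the minimum of `[α(V) : α(V) ∩ V]` over compact open subgroups `V`. -/
noncomputable def scale (α : MulAut G) : ℕ :=
  sInf {n : ℕ | ∃ V : Subgroup G, IsCompact (V : Set G) ∧ IsOpen (V : Set G) ∧
    n = V.relIndex (V.map (MulEquiv.toMonoidHom α))}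

/-! `W` is the product `W₊ W₋` (T1), and `W₋` is exactly the set of points whose forward orbit
stays in `W`, so writing `w = a b` it suffices to keep the forward orbit of `a ∈ W₊` inside `W`.
That orbit is bounded (because those of `w` and `b` are) and lies in `W₊₊`, which is closed (T2)
and hence locally compact. Baire's theorem applied to the increasing union `W₊₊ = ⋃ αⁿ(W₊)` of
compact subgroups makes some `αᴺ(W₊)` open in `W₊₊`, so the compact closure of the orbit lies in a
single `αᴹ(W₊)`; thus `αᴹ⁺ⁿ(a) ∈ αᴹ(W₊)`, i.e. `αⁿ(a) ∈ W₊ ⊆ W`, for every `n`. -/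

open Set

section

variable {G : Type*} [Group G]

lemma MulAut.mem_image_iff {e : MulAut G} {V : Set G} {x : G} : x ∈ e '' V ↔ e⁻¹ x ∈ V :=
  ⟨by rintro ⟨y, hy, rfl⟩; rwa [MulAut.inv_apply_self],
    fun h => ⟨_, h, MulAut.apply_inv_self _ _ _⟩⟩

lemma mem_plusSet_iff {α : MulAut G} {V : Set G} {x : G} :
    x ∈ plusSet α V ↔ ∀ n : ℕ, (α⁻¹ ^ n) x ∈ V := by
  simp only [plusSet, mem_iInter, MulAut.mem_image_iff, inv_pow]

lemma mem_minusSet_iff {α : MulAut G} {V : Set G} {x : G} :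
    x ∈ minusSet α V ↔ ∀ n : ℕ, (α ^ n) x ∈ V := by
  simp only [minusSet, mem_iInter, MulAut.mem_image_iff, inv_pow, inv_inv]

lemma plusSet_subset (α : MulAut G) (V : Set G) : plusSet α V ⊆ V :=
  fun _ hx => by simpa using mem_plusSet_iff.1 hx 0

lemma coe_plusSub (α : MulAut G) (H : Subgroup G) : (plusSub α H : Set G) = plusSet α H := by
  simp [plusSub, plusSet]

lemma plusSub_le_map (α : MulAut G) (H : Subgroup G) :
    plusSub α H ≤ (plusSub α H).map α.toMonoidHom := by
  intro x hx
  rw [← SetLike.mem_coe, coe_plusSub, mem_plusSet_iff] at hx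
  refine ⟨α⁻¹ x, ?_, MulAut.apply_inv_self G α x⟩
  rw [coe_plusSub, mem_plusSet_iff]
  intro n
  simpa only [pow_succ, MulAut.mul_apply] using hx (n + 1)

lemma monotone_map_pow_plusSub (α : MulAut G) (H : Subgroup G) :
    Monotone fun n : ℕ => (plusSub α H).map (α ^ n).toMonoidHom := by
  refine monotone_nat_of_le_succ fun n => ?_
  calc (plusSub α H).map (α ^ n).toMonoidHom
      ≤ ((plusSub α H).map α.toMonoidHom).map (α ^ n).toMonoidHom :=
        Subgroup.map_mono (plusSub_le_map α H)
    _ = (plusSub α H).map (α ^ (n + 1)).toMonoidHom := by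
        rw [Subgroup.map_map, pow_succ]; rfl

lemma coe_map_pow_plusSub (α : MulAut G) (H : Subgroup G) (n : ℕ) :
    ((plusSub α H).map (α ^ n).toMonoidHom : Set G) = ⇑(α ^ n) '' plusSet α H := by
  rw [Subgroup.coe_map, coe_plusSub]; rfl

lemma iUnion_coe_map_pow_plusSub (α : MulAut G) (H : Subgroup G) :
    ⋃ n : ℕ, ((plusSub α H).map (α ^ n).toMonoidHom : Set G) = plusplusSet α H := by
  simp only [coe_map_pow_plusSub, plusplusSet]

lemma Subgroup.exists_isOpen_of_iUnion_eq_univ [TopologicalSpace G] [SeparatelyContinuousMul G]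
    [BaireSpace G] {ι : Type*} [Countable ι]
    (K : ι → Subgroup G) (hKc : ∀ i, IsClosed (K i : Set G)) (hKU : ⋃ i, (K i : Set G) = univ) :
    ∃ i, IsOpen (K i : Set G) := by
  obtain ⟨i, x, hx⟩ := nonempty_interior_of_iUnion_of_closed hKc hKU
  exact ⟨i, (K i).isOpen_of_mem_nhds (mem_interior_iff_mem_nhds.1 hx)⟩

lemma IsCompact.exists_subset_subgroup_of_subset_iUnion [TopologicalSpace G]
    [IsTopologicalGroup G] [LocallyCompactSpace G]
    {K : ℕ → Subgroup G} (hK : Monotone K) (hKc : ∀ n, IsClosed (K n : Set G))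
    (hKU : IsClosed (⋃ n, (K n : Set G))) {C : Set G} (hC : IsCompact C)
    (hCK : C ⊆ ⋃ n, (K n : Set G)) : ∃ n, C ⊆ K n := by
  set L := ⨆ n, K n
  have hL : (L : Set G) = ⋃ n, (K n : Set G) := Subgroup.coe_iSup_of_directed hK.directed_le
  have : LocallyCompactSpace L := (hL ▸ hKU).locallyCompactSpace
  set K' : ℕ → Subgroup L := fun n => (K n).subgroupOf L
  have hK'c : ∀ n, IsClosed (K' n : Set L) := fun n => by
    rw [Subgroup.coe_subgroupOf]
    exact (hKc n).preimage continuous_subtype_val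
  have hK'U : ∀ x : L, ∃ n, x ∈ K' n := fun x =>
    (mem_iUnion.1 (hL ▸ x.2 : (x : G) ∈ ⋃ n, (K n : Set G))).imp fun _ hn =>
      Subgroup.mem_subgroupOf.2 hn
  -- Baire makes some `K' N` open, hence every larger `K' n` too: a directed open cover of `C`.
  obtain ⟨N, hN⟩ := Subgroup.exists_isOpen_of_iUnion_eq_univ K' hK'c
    (eq_univ_of_forall fun x => mem_iUnion.2 (hK'U x))
  have hK'mono : Monotone fun m => (K' (N + m) : Set L) := fun m m' h =>
    Subgroup.subgroupOf_mono L (hK (by omega))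
  have hC' : IsCompact (Subtype.val ⁻¹' C : Set L) := by
    rwa [Subtype.isCompact_iff, image_preimage_eq_of_subset]
    rwa [Subtype.range_coe, hL]
  obtain ⟨m, hm⟩ := hC'.elim_directed_cover (fun m => (K' (N + m) : Set L))
    (fun m => Subgroup.isOpen_mono (hK'mono (Nat.zero_le m)) hN)
    (fun x _ => mem_iUnion.2 ((hK'U x).imp fun n hn =>
      Subgroup.subgroupOf_mono L (hK (Nat.le_add_left n N)) hn))
    hK'mono.directed_le
  refine ⟨N + m, fun x hx => ?_⟩
  have hxL : x ∈ L := by rw [← SetLike.mem_coe, hL]; exact hCK hx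
  exact Subgroup.mem_subgroupOf.1 (hm (show (⟨x, hxL⟩ : L) ∈ Subtype.val ⁻¹' C from hx))

lemma MulAut.continuous_pow [TopologicalSpace G] {α : MulAut G} (hα : Continuous α) (n : ℕ) :
    Continuous ⇑(α ^ n) := by
  induction n with
  | zero => exact continuous_id
  | succ n ih => rw [pow_succ, MulAut.coe_mul]; exact ih.comp hα

lemma isCompact_plusSet [TopologicalSpace G] [T2Space G] {α : MulAut G} (hα : Continuous α)
    {V : Set G} (hV : IsCompact V) : IsCompact (plusSet α V) :=
  hV.of_isClosed_subset
    (isClosed_iInter fun n => (hV.image (MulAut.continuous_pow hα n)).isClosed)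
    (plusSet_subset α V)

lemma isCompact_closure_orbit_of_mem_minusSet [TopologicalSpace G] [ContinuousMul G] [T2Space G]
    {α : MulAut G} {W : Subgroup G} (hWc : IsCompact (W : Set G)) {a b : G}
    (hb : b ∈ minusSet α W) (hab : IsCompact (closure (range fun n : ℕ => (α ^ n) (a * b)))) :
    IsCompact (closure (range fun n : ℕ => (α ^ n) a)) := by
  refine (hab.mul hWc).of_isClosed_subset isClosed_closure
    (closure_minimal (range_subset_iff.2 fun n => ?_) (hab.mul hWc).isClosed)
  rw [← mul_inv_cancel_right ((α ^ n) a) ((α ^ n) b), ← map_mul]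
  exact mul_mem_mul (subset_closure ⟨n, rfl⟩) (W.inv_mem (mem_minusSet_iff.1 hb n))

end

theorem stmt1_general [LocallyCompactSpace G] [T2Space G]
    (α : MulAut G) (hα : Continuous ⇑α)
    (W : Subgroup G) (hWc : IsCompact (W : Set G))
    (hW : IsTidy α (W : Set G))
    (w : G) (hw : w ∈ W)
    (hbd : IsCompact (closure (Set.range fun n : ℕ => (α ^ n) w))) :
    w ∈ minusSet α (W : Set G) ∧ ∀ n : ℕ, (α ^ n) w ∈ W := by
  obtain ⟨hT1, hT2⟩ := hW
  obtain ⟨a, ha, b, hb, rfl⟩ : w ∈ plusSet α W * minusSet α W := hT1 ▸ hw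
  have hKc (n : ℕ) : IsClosed ((plusSub α W).map (α ^ n).toMonoidHom : Set G) := by
    rw [coe_map_pow_plusSub]
    exact ((isCompact_plusSet hα hWc).image (MulAut.continuous_pow hα n)).isClosed
  have hCK : closure (range fun n : ℕ => (α ^ n) a) ⊆
      ⋃ n : ℕ, ((plusSub α W).map (α ^ n).toMonoidHom : Set G) := by
    rw [iUnion_coe_map_pow_plusSub]
    exact closure_minimal (range_subset_iff.2 fun n => mem_iUnion.2 ⟨n, a, ha, rfl⟩) hT2
  obtain ⟨M, hM⟩ := IsCompact.exists_subset_subgroup_of_subset_iUnion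
    (monotone_map_pow_plusSub α W) hKc (iUnion_coe_map_pow_plusSub α W ▸ hT2)
    (isCompact_closure_orbit_of_mem_minusSet hWc hb hbd) hCK
  have haW (n : ℕ) : (α ^ n) a ∈ W := by
    have h : (α ^ (M + n)) a ∈ ⇑(α ^ M) '' plusSet α W :=
      coe_map_pow_plusSub α W M ▸ hM (subset_closure ⟨M + n, rfl⟩)
    rw [MulAut.mem_image_iff, pow_add, MulAut.mul_apply, MulAut.inv_apply_self] at h
    exact plusSet_subset _ _ h
  have hab (n : ℕ) : (α ^ n) (a * b) ∈ W := by
    rw [map_mul]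
    exact W.mul_mem (haW n) (mem_minusSet_iff.1 hb n)
  exact ⟨mem_minusSet_iff.2 hab, hab⟩

theorem stmt1 [LocallyCompactSpace G] [TotallyDisconnectedSpace G] [T2Space G]
    (α : MulAut G) (hα : Continuous ⇑α) (hα' : Continuous ⇑(α⁻¹))
    (W : Subgroup G) (hWc : IsCompact (W : Set G)) (hWo : IsOpen (W : Set G))
    (hW : IsTidy α (W : Set G))
    (w : G) (hw : w ∈ W)
    (hbd : IsCompact (closure (Set.range fun n : ℕ => (α ^ n) w))) :
    w ∈ minusSet α (W : Set G) ∧ ∀ n : ℕ, (α ^ n) w ∈ W :=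
  stmt1_general α hα W hWc hW w hw hbd
end

section
/- Let α and β be commuting automorphisms of G and let K be the closure of the set {g ∈ G : βʲ(g) → e as j → ∞ and {β⁻ʲ(g) : j ≥ 0} is bounded}. Then K is a compact subgroup of G and α(K) = K. -/
open scoped Pointwise

universe u

variable {G : Type u} [Group G] [TopologicalSpace G] [IsTopologicalGroup G]

/-! For a compact open subgroup `U`, let `X` be the closure of `U₋₋ = ⋃ₘ β⁻ᵐ(U₋)`, a closed
`β`-invariant subgroup. It is covered by the increasing open sets `β⁻ᵐ(U₋)·U`, so every compact
subset of `X` lies in a single `β⁻ᵐ(U₋)·V`, where `V = U ∩ X`. Applied to `β(V)` this gives `m₁`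
with `βⁿ(β⁻ⁿ(U₋)·V) ⊆ U₋·β^{m₁}(V)` for all `n ≥ m₁`, and the right side is compact.
If `βʲ z → 1` and the backward orbit of `z` is bounded, then `z ∈ U₋₋` and the closure of its
backward orbit is a compact subset of `X`; so `β⁻ⁿ z ∈ β⁻ⁿ(U₋)·V` for large `n`, and `z` lies in
`U₋·β^{m₁}(V)`. -/

open Filter Set Topology

/-- **van Dantzig**: the stabiliser of a compact open neighbourhood `V` of `1` under left
translation is open, because `W * V ⊆ V` for some neighbourhood `W` of `1`, and it lies in `V`. -/
theorem exists_isCompact_isOpen_subgroup [LocallyCompactSpace G] [TotallyDisconnectedSpace G]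
    [T2Space G] : ∃ U : Subgroup G, IsCompact (U : Set G) ∧ IsOpen (U : Set G) := by
  obtain ⟨K, hK, hK1⟩ := exists_compact_mem_nhds (1 : G)
  obtain ⟨V, ⟨hVclosed, hVopen⟩, hV1, hVK⟩ :=
    loc_compact_Haus_tot_disc_of_zero_dim.mem_nhds_iff.mp hK1
  have hVc : IsCompact V := hK.of_isClosed_subset hVclosed hVK
  obtain ⟨W, hW1, hWV⟩ := compact_open_separated_mul_left hVc hVopen subset_rfl
  set H := MulAction.stabilizer G V
  have hHV : (H : Set G) ⊆ V := fun g hg => by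
    simpa [MulAction.mem_stabilizer_iff.mp hg] using smul_mem_smul_set (a := g) hV1
  have hH1 : (H : Set G) ∈ 𝓝 1 := by
    refine mem_of_superset (inter_mem hW1 (inv_mem_nhds_one G hW1)) fun g ⟨hg, hg'⟩ => ?_
    refine MulAction.mem_stabilizer_iff.mpr (subset_antisymm ?_ ?_)
    · exact (smul_set_subset_mul hg).trans hWV
    · exact subset_smul_set_iff.mpr ((smul_set_subset_mul (mem_inv.mp hg')).trans hWV)
  have hHo : IsOpen (H : Set G) := H.isOpen_of_mem_nhds hH1
  exact ⟨H, hVc.of_isClosed_subset (H.isClosed_of_isOpen hHo) hHV, hHo⟩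

theorem MulAut.continuous_pow_s4 {M : Type*} [Monoid M] [TopologicalSpace M] {β : MulAut M}
    (hβ : Continuous β) (n : ℕ) : Continuous ⇑(β ^ n) := by
  induction n with
  | zero => exact continuous_id
  | succ n ih => simpa only [pow_succ, MulAut.coe_mul] using ih.comp hβ

theorem MulAut.pow_add_apply {M : Type*} [Monoid M] (β : MulAut M) (m n : ℕ) (x : M) :
    (β ^ (m + n)) x = (β ^ m) ((β ^ n) x) := by
  rw [pow_add, MulAut.mul_apply]

theorem Commute.mulAut_apply {M : Type*} [Monoid M] {α β : MulAut M} (h : Commute α β) (g : M) :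
    α (β g) = β (α g) :=
  DFunLike.congr_fun h.eq g

def boundedContraction (β : MulAut G) : Subgroup G where
  carrier := {g | Tendsto (fun j : ℕ => (β ^ j) g) atTop (𝓝 1) ∧
    IsCompact (closure (range fun j : ℕ => (β⁻¹ ^ j) g))}
  one_mem' :=
    ⟨by simpa using tendsto_const_nhds, by simpa using (isCompact_singleton (x := (1 : G))).closure⟩
  mul_mem' := by
    rintro g h ⟨hg, hgc⟩ ⟨hh, hhc⟩
    refine ⟨by simpa using hg.mul hh, (hgc.mul hhc).closure_of_subset ?_⟩
    rintro _ ⟨j, rfl⟩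
    simpa using Set.mul_mem_mul (subset_closure (mem_range_self j))
      (subset_closure (mem_range_self j))
  inv_mem' := by
    rintro g ⟨hg, hgc⟩
    refine ⟨by simpa using hg.inv, hgc.inv.closure_of_subset ?_⟩
    rintro _ ⟨j, rfl⟩
    simpa using subset_closure (mem_range_self j)

theorem apply_mem_boundedContraction {α β : MulAut G} (hα : Continuous α) (hcomm : Commute α β)
    {g : G} (hg : g ∈ boundedContraction β) : α g ∈ boundedContraction β := by
  obtain ⟨hg, hgc⟩ := hg
  refine ⟨?_, (hgc.image hα).closure_of_subset ?_⟩
  · simpa only [Function.comp_def, (hcomm.pow_right _).mulAut_apply] using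
      (hα.tendsto' 1 1 (map_one α)).comp hg
  · rintro _ ⟨j, rfl⟩
    exact ⟨_, subset_closure (mem_range_self j), (hcomm.inv_right.pow_right j).mulAut_apply g⟩

theorem image_closure_boundedContraction {α β : MulAut G} (hα : Continuous α)
    (hα' : Continuous ⇑(α⁻¹)) (hcomm : Commute α β) :
    α '' closure (boundedContraction β) = closure (boundedContraction β) := by
  let e : G ≃ₜ G := ⟨α.toEquiv, hα, hα'⟩
  have hS : α '' (boundedContraction β) = boundedContraction β :=
    subset_antisymm (image_subset_iff.mpr fun g => apply_mem_boundedContraction hα hcomm)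
      fun g hg => ⟨α⁻¹ g, apply_mem_boundedContraction hα' hcomm.inv_left hg, by simp⟩
  exact (e.image_closure _).trans (congrArg closure hS)

section Contraction

variable {M : Type*} [Group M] (β : MulAut M) (U : Subgroup M)

/-- The subgroup `U₋ = ⋂_{k ≥ 0} β⁻ᵏ(U)`; as a set this is `minusSet β U`. -/
def minusSubgroup : Subgroup M := ⨅ k : ℕ, U.comap (β ^ k).toMonoidHom

def minusLevel (m : ℕ) : Subgroup M := (minusSubgroup β U).comap (β ^ m).toMonoidHom

/-- The subgroup `U₋₋ = ⋃_{m ≥ 0} β⁻ᵐ(U₋)`. -/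
def minusminusSubgroup : Subgroup M := ⨆ m : ℕ, minusLevel β U m

variable {β U}

theorem mem_minusSubgroup {x : M} : x ∈ minusSubgroup β U ↔ ∀ k : ℕ, (β ^ k) x ∈ U := by
  simp [minusSubgroup]

theorem mem_minusLevel {m : ℕ} {x : M} :
    x ∈ minusLevel β U m ↔ (β ^ m) x ∈ minusSubgroup β U :=
  Iff.rfl

theorem apply_mem_minusSubgroup {x : M} (hx : x ∈ minusSubgroup β U) :
    β x ∈ minusSubgroup β U :=
  mem_minusSubgroup.mpr fun k => by
    simpa [MulAut.pow_add_apply] using mem_minusSubgroup.mp hx (k + 1)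

theorem pow_apply_mem_minusSubgroup {m n : ℕ} (h : m ≤ n) {x : M} (hx : x ∈ minusLevel β U m) :
    (β ^ n) x ∈ minusSubgroup β U := by
  obtain ⟨k, rfl⟩ := Nat.exists_eq_add_of_le' h
  rw [MulAut.pow_add_apply]
  induction k with
  | zero => simpa using mem_minusLevel.mp hx
  | succ k ih => simpa [pow_succ'] using apply_mem_minusSubgroup (ih (Nat.le_add_left m k))

theorem minusLevel_mono : Monotone (minusLevel β U) :=
  fun _ _ h _ hx => pow_apply_mem_minusSubgroup h hx

theorem mem_minusminusSubgroup {x : M} :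
    x ∈ minusminusSubgroup β U ↔ ∃ m, x ∈ minusLevel β U m :=
  Subgroup.mem_iSup_of_directed minusLevel_mono.directed_le

theorem apply_mem_minusminusSubgroup {x : M} (hx : x ∈ minusminusSubgroup β U) :
    β x ∈ minusminusSubgroup β U := by
  obtain ⟨m, hm⟩ := mem_minusminusSubgroup.mp hx
  refine mem_minusminusSubgroup.mpr ⟨m, mem_minusLevel.mpr ?_⟩
  rw [← (Commute.self_pow β m).mulAut_apply]
  exact apply_mem_minusSubgroup hm

theorem inv_pow_apply_mem_minusminusSubgroup (j : ℕ) {x : M} (hx : x ∈ minusminusSubgroup β U) :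
    (β⁻¹ ^ j) x ∈ minusminusSubgroup β U := by
  obtain ⟨m, hm⟩ := mem_minusminusSubgroup.mp hx
  refine mem_minusminusSubgroup.mpr ⟨m + j, mem_minusLevel.mpr ?_⟩
  rwa [MulAut.pow_add_apply, inv_pow, MulAut.apply_inv_self]

theorem mem_minusminusSubgroup_of_eventually {x : M} (hx : ∀ᶠ k in atTop, (β ^ k) x ∈ U) :
    x ∈ minusminusSubgroup β U := by
  obtain ⟨N, hN⟩ := eventually_atTop.mp hx
  refine mem_minusminusSubgroup.mpr ⟨N, mem_minusLevel.mpr (mem_minusSubgroup.mpr fun k => ?_)⟩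
  rw [← MulAut.pow_add_apply]
  exact hN _ (Nat.le_add_left N k)

theorem pow_apply_mem_of_forall_apply_mem_mul {V : Set M} {m : ℕ}
    (hV : ∀ v ∈ V, β v ∈ (minusLevel β U m : Set M) * V) {n : ℕ} (hn : m ≤ n) {y : M}
    (hy : y ∈ (minusLevel β U n : Set M) * V) :
    (β ^ n) y ∈ (minusSubgroup β U : Set M) * (β ^ m) '' V := by
  set F := (minusSubgroup β U : Set M) * (β ^ m) '' V
  have absorb : ∀ {n : ℕ}, (∀ v ∈ V, (β ^ n) v ∈ F) →
      ∀ y ∈ (minusLevel β U n : Set M) * V, (β ^ n) y ∈ F := by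
    rintro n hn _ ⟨w, hw, v, hv, rfl⟩
    obtain ⟨a, ha, b, hb, hab⟩ := hn v hv
    refine ⟨(β ^ n) w * a, mul_mem (mem_minusLevel.mp hw) ha, b, hb, ?_⟩
    simp only [map_mul, ← hab, mul_assoc]
  refine absorb ?_ y hy
  clear hy
  induction n, hn using Nat.le_induction with
  | base => exact fun v hv => ⟨1, one_mem _, _, mem_image_of_mem _ hv, one_mul _⟩
  | succ n hmn ih =>
    intro v hv
    rw [pow_succ, MulAut.mul_apply]
    exact absorb ih _ (Set.mul_subset_mul_right (minusLevel_mono hmn) (hV v hv))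

end Contraction

section Compactness

variable {β : MulAut G} {U : Subgroup G}

theorem isCompact_minusSubgroup (hβ : Continuous β) (hUc : IsCompact (U : Set G))
    (hUo : IsOpen (U : Set G)) : IsCompact (minusSubgroup β U : Set G) := by
  refine hUc.of_isClosed_subset ?_ fun x hx => by simpa using mem_minusSubgroup.mp hx 0
  simp only [minusSubgroup, Subgroup.coe_iInf, Subgroup.coe_comap]
  exact isClosed_iInter fun k =>
    (U.isClosed_of_isOpen hUo).preimage (MulAut.continuous_pow_s4 hβ k)

theorem exists_subset_minusLevel_mul (hUo : IsOpen (U : Set G)) {C : Set G} (hC : IsCompact C)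
    (hCL : C ⊆ closure (minusminusSubgroup β U)) : ∃ m, C ⊆ minusLevel β U m * U := by
  have hcover : closure (minusminusSubgroup β U : Set G) ⊆ ⋃ m, minusLevel β U m * U := by
    rw [← Set.iUnion_mul, ← Subgroup.coe_iSup_of_directed minusLevel_mono.directed_le]
    exact closure_subset_mul_right_of_mem_nhds_one_of_inv _ (hUo.mem_nhds U.one_mem)
      fun _ => U.inv_mem
  exact hC.elim_directed_cover _ (fun _ => hUo.mul_left) (hCL.trans hcover)
    (Monotone.directed_le fun _ _ h => Set.mul_subset_mul_right (minusLevel_mono h))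

theorem exists_forall_subset_minusLevel_mul_inf (hUo : IsOpen (U : Set G)) {C : Set G}
    (hC : IsCompact C) (hCX : C ⊆ (minusminusSubgroup β U).topologicalClosure) :
    ∃ m, ∀ n ≥ m, C ⊆ minusLevel β U n * ↑(U ⊓ (minusminusSubgroup β U).topologicalClosure) := by
  obtain ⟨m, hm⟩ := exists_subset_minusLevel_mul hUo hC hCX
  refine ⟨m, fun n hn x hx => ?_⟩
  have hle : minusLevel β U n ≤ (minusminusSubgroup β U).topologicalClosure :=
    (le_iSup (minusLevel β U) n).trans (Subgroup.le_topologicalClosure _)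
  rw [Subgroup.mul_inf_assoc _ _ _ hle]
  exact ⟨Set.mul_subset_mul_right (minusLevel_mono hn) (hm hx), hCX hx⟩

theorem exists_isCompact_boundedContraction_subset (hβ : Continuous β)
    (hUc : IsCompact (U : Set G)) (hUo : IsOpen (U : Set G)) :
    ∃ F : Set G, IsCompact F ∧ (boundedContraction β : Set G) ⊆ F := by
  set X := (minusminusSubgroup β U).topologicalClosure
  set V := U ⊓ X
  have hVc : IsCompact (V : Set G) :=
    hUc.inter_right (minusminusSubgroup β U).isClosed_topologicalClosure
  have hβV : β '' V ⊆ X := image_subset_iff.mpr fun v hv =>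
    map_mem_closure hβ hv.2 fun _ => apply_mem_minusminusSubgroup
  obtain ⟨m₁, hm₁⟩ := exists_forall_subset_minusLevel_mul_inf hUo (hVc.image hβ) hβV
  refine ⟨_, (isCompact_minusSubgroup hβ hUc hUo).mul (hVc.image (MulAut.continuous_pow_s4 hβ m₁)),
    fun z ⟨hz, hzc⟩ => ?_⟩
  have hzL : z ∈ minusminusSubgroup β U :=
    mem_minusminusSubgroup_of_eventually (hz (hUo.mem_nhds U.one_mem))
  have horbit : closure (range fun j : ℕ => (β⁻¹ ^ j) z) ⊆ X :=
    closure_mono (range_subset_iff.mpr fun j => inv_pow_apply_mem_minusminusSubgroup j hzL)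
  obtain ⟨m₂, hm₂⟩ := exists_forall_subset_minusLevel_mul_inf hUo hzc horbit
  have := pow_apply_mem_of_forall_apply_mem_mul
    (fun v hv => hm₁ m₁ le_rfl (mem_image_of_mem β hv)) (le_max_left m₁ m₂)
    (hm₂ _ (le_max_right m₁ m₂) (subset_closure (mem_range_self (max m₁ m₂))))
  rwa [inv_pow, MulAut.apply_inv_self] at this

end Compactness

theorem stmt4_general [LocallyCompactSpace G] [TotallyDisconnectedSpace G] [T2Space G]
    (α β : MulAut G) (hα : Continuous ⇑α) (hα' : Continuous ⇑(α⁻¹))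
    (hβ : Continuous ⇑β) (hcomm : Commute α β)
    (K : Set G)
    (hK : K = closure {g : G |
      Filter.Tendsto (fun j : ℕ => (β ^ j) g) Filter.atTop (nhds 1) ∧
      IsCompact (closure (Set.range fun j : ℕ => (β⁻¹ ^ j) g))}) :
    IsCompact K ∧ (∃ Ksub : Subgroup G, (Ksub : Set G) = K) ∧ ⇑α '' K = K := by
  change K = closure (boundedContraction β : Set G) at hK
  subst hK
  obtain ⟨U, hUc, hUo⟩ := exists_isCompact_isOpen_subgroup (G := G)
  obtain ⟨F, hFc, hF⟩ := exists_isCompact_boundedContraction_subset hβ hUc hUo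
  exact ⟨hFc.closure_of_subset hF, ⟨(boundedContraction β).topologicalClosure, rfl⟩,
    image_closure_boundedContraction hα hα' hcomm⟩

theorem stmt4 [LocallyCompactSpace G] [TotallyDisconnectedSpace G] [T2Space G]
    (α β : MulAut G) (hα : Continuous ⇑α) (hα' : Continuous ⇑(α⁻¹))
    (hβ : Continuous ⇑β) (hβ' : Continuous ⇑(β⁻¹)) (hcomm : Commute α β)
    (K : Set G)
    (hK : K = closure {g : G |
      Filter.Tendsto (fun j : ℕ => (β ^ j) g) Filter.atTop (nhds 1) ∧
      IsCompact (closure (Set.range fun j : ℕ => (β⁻¹ ^ j) g))}) :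
    IsCompact K ∧ (∃ Ksub : Subgroup G, (Ksub : Set G) = K) ∧ ⇑α '' K = K :=
  stmt4_general α β hα hα' hβ hcomm K hK
end

section
/- Let α and β be commuting automorphisms of G and let U be a compact open subgroup of G which is tidy for α and satisfies β(U) = U. Then U is tidy for the composite automorphism α∘β. -/
open scoped Pointwise

universe u

variable {G : Type u} [Group G] [TopologicalSpace G] [IsTopologicalGroup G]

/-!
Since `β` commutes with `α` and fixes `U`, `(αβ)ⁿ(U) = αⁿ(βⁿ(U)) = αⁿ(U)`, and likewise for
`(αβ)⁻¹ = α⁻¹β⁻¹`; so `α` and `αβ` have the same sets `U₊` and `U₋`. As `β` also fixes `U₊`,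
the same computation gives `U₊₊` for both, and tidiness for `α` and for `αβ` coincide.
-/

section

variable {G : Type*} [Group G] {α β : MulAut G} {S : Set G}

lemma pow_mul_image_eq_of_commute (hcomm : Commute α β) (hS : ⇑β '' S = S) (n : ℕ) :
    ⇑((α * β) ^ n) '' S = ⇑(α ^ n) '' S := by
  have hβn : β ^ n • S = S := pow_mem (show β ∈ MulAction.stabilizer (MulAut G) S from hS) n
  change (α * β) ^ n • S = α ^ n • S
  rw [hcomm.mul_pow, mul_smul, hβn]

lemma plusSet_mul_of_commute (hcomm : Commute α β) (hS : ⇑β '' S = S) :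
    plusSet (α * β) S = plusSet α S :=
  Set.iInter_congr (pow_mul_image_eq_of_commute hcomm hS)

lemma minusSet_mul_of_commute (hcomm : Commute α β) (hS : ⇑β '' S = S) :
    minusSet (α * β) S = minusSet α S := by
  have hβinv : ⇑β⁻¹ '' S = S := inv_mem (show β ∈ MulAction.stabilizer (MulAut G) S from hS)
  change plusSet (α * β)⁻¹ S = plusSet α⁻¹ S
  rw [hcomm.mul_inv]
  exact plusSet_mul_of_commute hcomm.inv_inv hβinv

lemma image_plusSet_of_commute (hcomm : Commute α β) (hS : ⇑β '' S = S) :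
    ⇑β '' plusSet α S = plusSet α S := by
  change β • ⋂ n : ℕ, α ^ n • S = ⋂ n : ℕ, α ^ n • S
  rw [Set.smul_set_iInter]
  refine Set.iInter_congr fun n => ?_
  rw [smul_smul, ← (hcomm.pow_left n).eq, mul_smul]
  exact congrArg (α ^ n • ·) hS

lemma plusplusSet_mul_of_commute (hcomm : Commute α β) (hS : ⇑β '' S = S) :
    plusplusSet (α * β) S = plusplusSet α S := by
  unfold plusplusSet
  rw [plusSet_mul_of_commute hcomm hS]
  exact Set.iUnion_congr (pow_mul_image_eq_of_commute hcomm (image_plusSet_of_commute hcomm hS))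

lemma isTidy_mul_iff_of_commute [TopologicalSpace G] (hcomm : Commute α β) (hS : ⇑β '' S = S) :
    IsTidy (α * β) S ↔ IsTidy α S := by
  rw [IsTidy, IsTidy, plusSet_mul_of_commute hcomm hS, minusSet_mul_of_commute hcomm hS,
    plusplusSet_mul_of_commute hcomm hS]

end

theorem stmt17_general (α β : MulAut G) (hcomm : Commute α β)
    (U : Subgroup G) (htidy : IsTidy α (U : Set G)) (hβU : ⇑β '' (U : Set G) = U) :
    IsTidy (α * β) (U : Set G) :=
  (isTidy_mul_iff_of_commute hcomm hβU).2 htidy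

theorem stmt17 [LocallyCompactSpace G] [TotallyDisconnectedSpace G] [T2Space G]
    (α β : MulAut G) (hα : Continuous ⇑α) (hα' : Continuous ⇑(α⁻¹))
    (hβ : Continuous ⇑β) (hβ' : Continuous ⇑(β⁻¹)) (hcomm : Commute α β)
    (U : Subgroup G) (hUc : IsCompact (U : Set G)) (hUo : IsOpen (U : Set G))
    (htidy : IsTidy α (U : Set G)) (hβU : ⇑β '' (U : Set G) = U) :
    IsTidy (α * β) (U : Set G) :=
  stmt17_general α β hcomm U htidy hβU
end
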